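/- Let H be a directed graph, W ⊆ V(H) a set of vertices such that the subgraph induced by W is connected, and σ : W → G a labelling by a finite abelian group G. An assignment f from the boundary edges ∂(W) to G extends to a solution of the subsystem A(W,σ) (the vertex equations at all v ∈ W) if and only if f satisfies the single boundary equation Σ_{e∈∂_+(W)} f(e) − Σ_{e∈∂_−(W)} f(e) = Σ_{v∈W} σ(v). -/

import Mathlib

/-!
Summing the vertex equations over `W`, every edge with both ends in `W` cancels, so any
solution satisfies the boundary equation. Conversely, start from `f` itself: it remains to
correct the net outflow at each `v ∈ W` by some `d v` with `∑ v ∈ W, d v = 0`, using only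
edges inside `W`. Pushing `d v` along a path of the connected induced graph from a fixed root
to `v` corrects `v` at the cost of the root, and the total cost at the root is `∑ d = 0`.
-/

open Finset

section Flows

variable {V E G : Type*} [Fintype E] [DecidableEq V] [AddCommGroup G]

def netOutflow (tail head : E → V) : (E → G) →+ (V → G) where
  toFun x v := ∑ e ∈ univ.filter (fun e => tail e = v), x e -
    ∑ e ∈ univ.filter (fun e => head e = v), x e
  map_zero' := by ext; simp
  map_add' x y := by ext; simp only [Pi.add_apply, sum_add_distrib]; abel

variable (tail head : E → V)

theorem netOutflow_apply (x : E → G) (v : V) :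
    netOutflow tail head x v = ∑ e ∈ univ.filter (fun e => tail e = v), x e -
      ∑ e ∈ univ.filter (fun e => head e = v), x e := rfl

theorem netOutflow_single [DecidableEq E] (e : E) (g : G) :
    netOutflow tail head (Pi.single e g) = Pi.single (tail e) g - Pi.single (head e) g := by
  ext v
  simp [netOutflow_apply, Pi.single_apply, eq_comm]

theorem sum_netOutflow (W : Finset V) (x : E → G) :
    ∑ v ∈ W, netOutflow tail head x v =
      ∑ e ∈ univ.filter (fun e => tail e ∈ W ∧ head e ∉ W), x e -
        ∑ e ∈ univ.filter (fun e => head e ∈ W ∧ tail e ∉ W), x e := by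
  have split (s t : E → V) : ∑ e ∈ univ.filter (fun e => s e ∈ W), x e =
      ∑ e ∈ univ.filter (fun e => s e ∈ W ∧ t e ∈ W), x e +
        ∑ e ∈ univ.filter (fun e => s e ∈ W ∧ t e ∉ W), x e := by
    rw [← sum_filter_add_sum_filter_not _ (fun e => t e ∈ W), filter_filter, filter_filter]
  simp only [netOutflow_apply, sum_sub_distrib, sum_fiberwise_eq_sum_filter,
    split tail head, split head tail, and_comm (a := head _ ∈ W)]
  abel

def internalFlows (W : Finset V) : AddSubgroup (E → G) where
  carrier := {x | ∀ e, ¬(tail e ∈ W ∧ head e ∈ W) → x e = 0}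
  zero_mem' _ _ := rfl
  add_mem' hx hy e he := by simp [hx e he, hy e he]
  neg_mem' hx e he := by simp [hx e he]

def inducedGraph (W : Finset V) : SimpleGraph W :=
  SimpleGraph.fromRel fun v w : W => ∃ e, tail e = (v : V) ∧ head e = (w : V)

variable {tail head} {W : Finset V}

theorem single_sub_single_mem_map_internalFlows {a b : W}
    (hab : (inducedGraph tail head W).Reachable a b) (g : G) :
    (Pi.single (b : V) g - Pi.single (a : V) g : V → G) ∈
      (internalFlows tail head W).map (netOutflow tail head) := by
  classical
  have arc_mem {e : E} (he : tail e ∈ W ∧ head e ∈ W) :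
      (Pi.single (tail e) g - Pi.single (head e) g : V → G) ∈
        (internalFlows tail head W).map (netOutflow tail head) := by
    refine ⟨Pi.single e g, fun e' he' => ?_, netOutflow_single tail head e g⟩
    exact Pi.single_eq_of_ne (M := fun _ => G) (fun h : e' = e => he' (h ▸ he)) g
  obtain ⟨w⟩ := hab
  induction w with
  | nil => simp
  | @cons a c b hac _ ih =>
    rw [← sub_add_sub_cancel _ (Pi.single (c : V) g)]
    refine add_mem ih ?_
    rcases hac.2 with ⟨e, hta, hhc⟩ | ⟨e, htc, hha⟩
    · rw [← neg_sub, ← hta, ← hhc]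
      exact neg_mem (arc_mem ⟨hta ▸ a.2, hhc ▸ c.2⟩)
    · rw [← htc, ← hha]
      exact arc_mem ⟨htc ▸ c.2, hha ▸ a.2⟩

theorem exists_mem_internalFlows_netOutflow_eq
    (hconn : (inducedGraph tail head W).Connected) (d : V → G) (hd : ∑ v ∈ W, d v = 0) :
    ∃ z ∈ internalFlows tail head W, ∀ v ∈ W, netOutflow tail head z v = d v := by
  obtain ⟨r⟩ := hconn.nonempty
  obtain ⟨z, hz, hzd⟩ :
      ∑ v ∈ W.attach, (Pi.single (v : V) (d v) - Pi.single (r : V) (d v) : V → G) ∈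
        (internalFlows tail head W).map (netOutflow tail head) :=
    sum_mem fun v _ => single_sub_single_mem_map_internalFlows (hconn.preconnected r v) _
  refine ⟨z, hz, fun u hu => ?_⟩
  rw [hzd, Finset.sum_apply]
  simp only [Pi.sub_apply, sum_sub_distrib, Pi.single_apply]
  rw [sum_attach W fun v => if u = v then d v else 0]
  simp [sum_attach W d, hd, hu]

end Flows

theorem stmt9_general (G V E : Type*) [AddCommGroup G]
    [Fintype E] [DecidableEq V]
    (tail head : E → V) (W : Finset V)
    (hconn : (SimpleGraph.fromRel
      (fun v w : ↥W => ∃ e, tail e = (v : V) ∧ head e = (w : V))).Connected)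
    (σ : V → G) (f : E → G) :
    (∃ x : E → G,
      (∀ e : E, (tail e ∈ W ∧ head e ∉ W) ∨ (head e ∈ W ∧ tail e ∉ W) → x e = f e) ∧
      ∀ v ∈ W,
        (∑ e ∈ Finset.univ.filter (fun e => tail e = v), x e) -
        (∑ e ∈ Finset.univ.filter (fun e => head e = v), x e) = σ v) ↔
    (∑ e ∈ Finset.univ.filter (fun e => tail e ∈ W ∧ head e ∉ W), f e) -
    (∑ e ∈ Finset.univ.filter (fun e => head e ∈ W ∧ tail e ∉ W), f e) =
      ∑ v ∈ W, σ v := by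
  simp only [← netOutflow_apply, ← sum_netOutflow]
  constructor
  · rintro ⟨x, hbdry, hx⟩
    rw [← sum_congr rfl hx, sum_netOutflow, sum_netOutflow]
    congr 1 <;> refine sum_congr rfl fun e he => (hbdry e ?_).symm <;> simp_all
  · intro hf
    obtain ⟨z, hz, hzd⟩ := exists_mem_internalFlows_netOutflow_eq hconn
      (fun v => σ v - netOutflow tail head f v) (by rw [sum_sub_distrib, hf, sub_self])
    refine ⟨f + z, fun e he => ?_, fun v hv => ?_⟩
    · rw [Pi.add_apply, hz e (by tauto), add_zero]
    · rw [map_add, Pi.add_apply, hzd v hv, add_sub_cancel]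

/-- For a set of vertices `W` inducing a connected subgraph, an assignment to the
boundary edges extends to a solution of the vertex equations at all `v ∈ W` iff it
satisfies the single boundary equation. -/
theorem stmt9 (G V E : Type*) [AddCommGroup G] [Fintype G]
    [Fintype V] [Fintype E] [DecidableEq V]
    (tail head : E → V) (W : Finset V)
    (hconn : (SimpleGraph.fromRel
      (fun v w : ↥W => ∃ e, tail e = (v : V) ∧ head e = (w : V))).Connected)
    (σ : V → G) (f : E → G) :
    (∃ x : E → G,
      (∀ e : E, (tail e ∈ W ∧ head e ∉ W) ∨ (head e ∈ W ∧ tail e ∉ W) → x e = f e) ∧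
      ∀ v ∈ W,
        (∑ e ∈ Finset.univ.filter (fun e => tail e = v), x e) -
        (∑ e ∈ Finset.univ.filter (fun e => head e = v), x e) = σ v) ↔
    (∑ e ∈ Finset.univ.filter (fun e => tail e ∈ W ∧ head e ∉ W), f e) -
    (∑ e ∈ Finset.univ.filter (fun e => head e ∈ W ∧ tail e ∉ W), f e) =
      ∑ v ∈ W, σ v :=
  stmt9_general G V E tail head W hconn σ f
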